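/- arXiv:2501.17625 — 3 statements merged into one kernel-verified Lean document; each statement's English description precedes it below -/
import Mathlib

section
/- Setting q = e^{h/2}, the series U(e^u) = e^{-h/2} f(e^{2u})^{-1} f(e^{-2u})^{-1} satisfies U(e^u)·U(e^{u+h/2}) = 1 in C((u))[[h]]. -/
/-!
STATEMENT 8: Setting q = e^{h/2}, the series
  U(e^u) = e^{-h/2} f(e^{2u})^{-1} f(e^{-2u})^{-1}
satisfies U(e^u)·U(e^{u+h/2}) = 1 in ℂ((u))[[h]].

We work in `B := PowerSeries (LaurentSeries ℂ)` = ℂ((u))[[h]] (outer variable h,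
inner variable u).  The elements F2, F2', Fm2, Fm2' play the roles of
f(e^{2u}), f(e^{2u+h}), f(e^{-2u}), f(e^{-2u-h}) respectively; they are
characterized (per the context) by the instances of the functional identity
f(x)·f(xq²)·(1-xq²) = 1-x  (q² = e^h)  at x = e^{2u} and x = e^{-2u-h}, and
G2, G2', Gm2, Gm2' are their inverses.  Note f((e^{u+h/2})²) = f(e^{2u+h}) and
f(e^{-2(u+h/2)}) = f(e^{-2u-h}), so
U(e^u) = e^{-h/2}·G2·Gm2 and U(e^{u+h/2}) = e^{-h/2}·G2'·Gm2'.
-/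

open PowerSeries

noncomputable section

abbrev B8 := PowerSeries (LaurentSeries ℂ)

/-- `e^{c·u}` as an element of ℂ((u)). -/
def expU (c : ℂ) : LaurentSeries ℂ :=
  (HahnSeries.ofPowerSeries ℤ ℂ) (PowerSeries.rescale c (PowerSeries.exp ℂ))

/-- `e^{c·h}` as an element of ℂ((u))[[h]]. -/
def expH (c : ℂ) : B8 :=
  PowerSeries.map (algebraMap ℂ (LaurentSeries ℂ)) (PowerSeries.rescale c (PowerSeries.exp ℂ))

/-- `e^{2u}` in ℂ((u))[[h]]. -/
def E2u : B8 := PowerSeries.C (expU 2)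

/-- `e^{-2u}` in ℂ((u))[[h]]. -/
def Em2u : B8 := PowerSeries.C (expU (-2))

/-! Multiplying the functional equation at `x = e^{2u}` and at `x⁻¹e^{-h}` gives
`f(e^{2u}) f(e^{2u+h}) f(e^{-2u-h}) f(e^{-2u}) = e^{-h}`, because `xy = 1` and `qr = 1`
(`q = e^h`, `r = e^{-h}`) give `(1 - x)(1 - yr) = r (1 - xq)(1 - y)`, and the common factor
`(1 - xq)(1 - y)` is nonzero in the domain ℂ((u))[[h]].
Inverting, `U(e^u) U(e^{u+h/2}) = e^{-h/2} e^{-h/2} e^{h} = 1`. -/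

lemma expU_add (a b : ℂ) : expU (a + b) = expU a * expU b := by
  rw [expU, expU, expU, ← map_mul, exp_mul_exp_eq_exp_add]

lemma expU_zero : expU 0 = 1 := by
  simp [expU, rescale_zero]

lemma expU_ne_one {c : ℂ} (hc : c ≠ 0) : expU c ≠ 1 := by
  intro h
  rw [expU, ← map_one (HahnSeries.ofPowerSeries ℤ ℂ)] at h
  have h1 := congrArg (coeff 1) (HahnSeries.ofPowerSeries_injective h)
  simp [coeff_rescale, coeff_exp, coeff_one] at h1
  exact hc h1

lemma expH_add (a b : ℂ) : expH (a + b) = expH a * expH b := by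
  rw [expH, expH, expH, ← map_mul, exp_mul_exp_eq_exp_add]

lemma expH_zero : expH 0 = 1 := by
  simp [expH, rescale_zero]

lemma expH_mul_expH_neg (c : ℂ) : expH c * expH (-c) = 1 := by
  rw [← expH_add, add_neg_cancel, expH_zero]

lemma constantCoeff_expH (c : ℂ) : constantCoeff (expH c) = 1 := by
  simp [expH, coeff_rescale, ← coeff_zero_eq_constantCoeff, coeff_exp]

lemma E2u_mul_Em2u : E2u * Em2u = 1 := by
  rw [E2u, Em2u, ← map_mul, ← expU_add]
  norm_num [expU_zero]

lemma one_sub_C_expU_mul_ne_zero {c : ℂ} (hc : c ≠ 0) {g : B8} (hg : constantCoeff g = 1) :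
    1 - C (expU c) * g ≠ 0 := by
  intro h
  have h0 := congrArg constantCoeff h
  rw [map_sub, map_mul, constantCoeff_C, hg, map_one, map_zero, mul_one, sub_eq_zero] at h0
  exact expU_ne_one hc h0.symm

section FunctionalEquation

variable {R : Type*} [CommRing R]

theorem one_sub_mul_one_sub_mul_eq {x y q r : R} (hxy : x * y = 1) (hqr : q * r = 1) :
    (1 - x) * (1 - y * r) = r * ((1 - x * q) * (1 - y)) := by
  linear_combination (r - 1) * hxy + (x - x * y) * hqr

theorem prod_eq_of_functional_eq [IsDomain R] {x y q r a a' b b' : R} (hxy : x * y = 1)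
    (hqr : q * r = 1) (hne : (1 - x * q) * (1 - y) ≠ 0)
    (ha : a * a' * (1 - x * q) = 1 - x) (hb : b' * b * (1 - y) = 1 - y * r) :
    a * a' * (b' * b) = r := by
  refine mul_right_cancel₀ hne ?_
  calc a * a' * (b' * b) * ((1 - x * q) * (1 - y))
      = (a * a' * (1 - x * q)) * (b' * b * (1 - y)) := by ring
    _ = r * ((1 - x * q) * (1 - y)) := by
      rw [ha, hb, one_sub_mul_one_sub_mul_eq hxy hqr]

end FunctionalEquation

theorem stmt8 (F2 F2' Fm2 Fm2' G2 G2' Gm2 Gm2' : B8)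
    (hG2 : F2 * G2 = 1) (hG2' : F2' * G2' = 1)
    (hGm2 : Fm2 * Gm2 = 1) (hGm2' : Fm2' * Gm2' = 1)
    -- f(e^{2u})·f(e^{2u}·e^h)·(1 - e^{2u}e^h) = 1 - e^{2u}
    (hid1 : F2 * F2' * (1 - E2u * expH 1) = 1 - E2u)
    -- f(e^{-2u-h})·f(e^{-2u-h}·e^h)·(1 - e^{-2u}) = 1 - e^{-2u-h}
    (hid2 : Fm2' * Fm2 * (1 - Em2u) = 1 - Em2u * expH (-1)) :
    (expH (-(1/2)) * G2 * Gm2) * (expH (-(1/2)) * G2' * Gm2') = 1 := by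
  have hne1 : 1 - E2u * expH 1 ≠ 0 :=
    one_sub_C_expU_mul_ne_zero two_ne_zero (constantCoeff_expH 1)
  have hne2 : 1 - Em2u ≠ 0 := by
    simpa [Em2u] using
      one_sub_C_expU_mul_ne_zero (neg_ne_zero.2 two_ne_zero) (map_one constantCoeff)
  have hF : F2 * F2' * (Fm2' * Fm2) = expH (-1) :=
    prod_eq_of_functional_eq E2u_mul_Em2u (expH_mul_expH_neg 1) (mul_ne_zero hne1 hne2) hid1 hid2
  have hFG : expH (-1) * (G2 * G2' * (Gm2' * Gm2)) = 1 := by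
    rw [← hF]
    calc F2 * F2' * (Fm2' * Fm2) * (G2 * G2' * (Gm2' * Gm2))
        = (F2 * G2) * (F2' * G2') * ((Fm2' * Gm2') * (Fm2 * Gm2)) := by ring
      _ = 1 := by rw [hG2, hG2', hGm2, hGm2', mul_one, mul_one]
  calc (expH (-(1/2)) * G2 * Gm2) * (expH (-(1/2)) * G2' * Gm2')
      = expH (-(1/2) + -(1/2)) * (G2 * G2' * (Gm2' * Gm2)) := by rw [expH_add]; ring
    _ = 1 := by norm_num [hFG]

end
end

section
/- For any F(z₁,z₂) ∈ Hom(W, W((z₁^{1/2}, z₂^{1/2}))_h) the half-integer delta function decomposition holds: δ(z₂(1+z)/z₁)·F(z₁,z₂) = (1/2)·∑_{t=0,1} δ((-1)^t (z₂(1+z)/z₁)^{1/2})·F(z₁,z₂)|_{z₁^{1/2} = (-1)^t (z₂(1+z))^{1/2}}. -/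
/-!
STATEMENT 10: For any F(z₁,z₂) ∈ Hom(W, W((z₁^{1/2}, z₂^{1/2}))_h) the
half-integer delta function decomposition holds:
  δ(z₂(1+z)/z₁)·F(z₁,z₂)
    = (1/2)·∑_{t=0,1} δ((-1)^t (z₂(1+z)/z₁)^{1/2})·F(z₁,z₂)|_{z₁^{1/2} = (-1)^t (z₂(1+z))^{1/2}}.

Encoding: we compare the coefficients of z₁^{a/2} z₂^{b/2} z^c (a, b ∈ ℤ, c ∈ ℕ)
of the two sides.  The series F(z₁,z₂) applied to a vector of W is represented
by its family of coefficients f : ℤ → ℤ → W (exponents of z₁^{1/2}, z₂^{1/2}),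
with support bounded below (this is the ((z₁^{1/2},z₂^{1/2}))-condition, which
makes all sums below finite).  δ(x) = ∑_{k∈ℤ} x^k, δ(x^{1/2}) = ∑_{k∈ℤ} x^{k/2},
and (1+z)^{k/2} is expanded by the generalized binomial series, with
  binom(x, c) = x(x-1)⋯(x-c+1)/c!.

LHS coefficient:  ∑_k binom(k, c) · f(a+2k, b-2k),
RHS coefficient:  (1/2)·∑_{t=0,1} ∑_m (-1)^{t(m-a)} binom((m-a)/2, c) · f(m, a+b-m),
the sums running over the (finite) support allowed by the bound N.
-/

noncomputable def chooseC (x : ℂ) (c : ℕ) : ℂ :=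
  (∏ i ∈ Finset.range c, (x - (i : ℂ))) / (c.factorial : ℂ)

theorem stmt10 (W : Type*) [AddCommGroup W] [Module ℂ W] (N : ℕ)
    (f : ℤ → ℤ → W)
    (hf : ∀ m n : ℤ, (m < -(N : ℤ) ∨ n < -(N : ℤ)) → f m n = 0)
    (a b : ℤ) (c : ℕ) :
    ∑ k ∈ Finset.Icc (-(N + a.natAbs + b.natAbs : ℤ)) ((N : ℤ) + a.natAbs + b.natAbs),
        chooseC (k : ℂ) c • f (a + 2 * k) (b - 2 * k)
      = (2 : ℂ)⁻¹ •
          ∑ t ∈ Finset.range 2, ∑ m ∈ Finset.Icc (-(N : ℤ)) (a + b + (N : ℤ)),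
            ((((-1 : ℂ) ^ t) ^ (m - a)) * chooseC (((m - a : ℤ) : ℂ) / 2) c) •
              f m (a + b - m) := by
  classical
  set h : ℤ → W := fun m =>
    if 2 ∣ (m - a) then chooseC (((m - a) / 2 : ℤ) : ℂ) c • f m (a + b - m) else 0 with hh
  set φ : ℤ → ℤ := fun k => a + 2 * k with hφ
  set K : Finset ℤ := Finset.Icc (-(N + a.natAbs + b.natAbs : ℤ))
    ((N : ℤ) + a.natAbs + b.natAbs) with hK
  set I : Finset ℤ := Finset.Icc (-(N : ℤ)) (a + b + (N : ℤ)) with hI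
  have hzeroI : ∀ x ∈ K.image φ ∪ I, x ∉ I → h x = 0 := by
    intro x _ hxI
    simp only [hh]
    split_ifs with hd
    · have hbd : x < -(N : ℤ) ∨ a + b - x < -(N : ℤ) := by
        simp only [hI, Finset.mem_Icc] at hxI
        omega
      rw [hf x (a + b - x) hbd, smul_zero]
    · rfl
  have hzeroIm : ∀ x ∈ K.image φ ∪ I, x ∉ K.image φ → h x = 0 := by
    intro x hx hxim
    simp only [hh]
    split_ifs with hd
    · exfalso
      obtain ⟨k, hk⟩ := hd
      have hxI : x ∈ I := (Finset.mem_union.mp hx).resolve_left hxim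
      simp only [hI, Finset.mem_Icc] at hxI
      exact hxim (Finset.mem_image.mpr ⟨k, by
        simp only [hK, Finset.mem_Icc]; omega, by simp only [hφ]; omega⟩)
    · rfl
  have hL : ∀ k : ℤ, chooseC (k : ℂ) c • f (a + 2 * k) (b - 2 * k) = h (φ k) := by
    intro k
    simp only [hh, hφ]
    rw [if_pos ⟨k, by ring⟩]
    have e1 : (a + 2 * k - a) / 2 = k := by omega
    have e2 : a + b - (a + 2 * k) = b - 2 * k := by ring
    rw [e1, e2]
  have hLsum : ∑ k ∈ K, chooseC (k : ℂ) c • f (a + 2 * k) (b - 2 * k)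
      = ∑ m ∈ I, h m := by
    calc ∑ k ∈ K, chooseC (k : ℂ) c • f (a + 2 * k) (b - 2 * k)
        = ∑ k ∈ K, h (φ k) := Finset.sum_congr rfl fun k _ => hL k
      _ = ∑ m ∈ K.image φ, h m := by
          rw [Finset.sum_image]
          intro x _ y _ hxy
          simp only [hφ] at hxy
          omega
      _ = ∑ m ∈ K.image φ ∪ I, h m :=
          Finset.sum_subset Finset.subset_union_left hzeroIm
      _ = ∑ m ∈ I, h m :=
          (Finset.sum_subset Finset.subset_union_right hzeroI).symm
  rw [hLsum]
  rw [Finset.sum_range_succ, Finset.sum_range_one, ← Finset.sum_add_distrib,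
    Finset.smul_sum]
  refine Finset.sum_congr rfl fun m _ => ?_
  simp only [pow_zero, pow_one, one_zpow, one_mul, hh]
  by_cases hd : 2 ∣ (m - a)
  · obtain ⟨k, hk⟩ := hd
    rw [if_pos ⟨k, hk⟩]
    have he : ((-1 : ℂ)) ^ (m - a) = 1 := Even.neg_one_zpow ⟨k, by omega⟩
    have e1 : ((m - a : ℤ) : ℂ) / 2 = (((m - a) / 2 : ℤ) : ℂ) := by
      have h2 : (m - a) / 2 = k := by omega
      rw [h2, hk]
      push_cast
      ring
    rw [he, e1, one_mul, ← add_smul, smul_smul]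
    congr 1
    ring
  · rw [if_neg hd]
    obtain ⟨k, hk⟩ : ∃ k, m - a = 2 * k + 1 := ⟨(m - a) / 2, by omega⟩
    have he : ((-1 : ℂ)) ^ (m - a) = -1 := Odd.neg_one_zpow ⟨k, by omega⟩
    rw [he, neg_one_mul, neg_smul, add_neg_cancel, smul_zero]
end

section
/- Let R(z) ∈ (End C^N)^{⊗2}[[z,h]] satisfy the quantum Yang–Baxter equation and unitarity R₁₂(z)R₂₁(1/z) = 1. If L(z) is an FRT-operator over W satisfying ι_{x,y}(R₁₂(x/y))L₁(x)L₂(y) = L₂(y)L₁(x)R₁₂(x/y), then L_{[n+m]}(x,y) = R'^{12}_{nm}(x/y) L^{13}_{[n]}(x) L^{23}_{[m]}(y), where L_{[n]}(x) = R'_{[n]}(x) L₁(x₁)⋯L_n(x_n). -/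
/-!
STATEMENT 16: Let R(z) satisfy the quantum Yang–Baxter equation and unitarity.
If L(z) is an FRT-operator over W, i.e. ι_{x,y}(R₁₂(x/y))L₁(x)L₂(y) =
L₂(y)L₁(x)R₁₂(x/y), then
  L_{[n+m]}(x,y) = R'^{12}_{nm}(x/y) · L^{13}_{[n]}(x) · L^{23}_{[m]}(y),
where L_{[n]}(x) = R'_{[n]}(x) L₁(x₁)⋯L_n(x_n),
R'_{[n]}(x) = ∏→_{i<j} ι_{x_i,x_j} R_{ij}(x_i/x_j) and
R'^{12}_{nm}(x/y) = ∏←_{i=1..n} ∏→_{j=n+1..n+m} ι_{x_i,y_{j-n}} R_{ij}(x_i/y_{j-n}).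

Encoding: as in Statement 15, scalar series form a commutative ring S acting
centrally on the algebra 𝓐 of operator series.  The (n+m)-fold tensor product
of End ℂ^N is modeled by matrices indexed by `Fin (n+m) → Fin N`.  For each
pair of points p, p' of the combined family (x₁,…,x_n,y₁,…,y_m), `A p p'`
models the expansion ι R(p/p') with the first variable outer, and `B p p'` the
opposite expansion appearing on the right-hand side of the FRT-relation; `ℓ p`
models L evaluated at the p-th point.  The hypotheses are the FRT-relation at
each pair of points and the Yang–Baxter equation for both families of
expansions (all of which hold for an FRT-operator with R satisfying YBE and
unitarity); the superscripts 13, 23 correspond to the first n and last m sites.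
-/

open Matrix
open scoped Classical

noncomputable section

variable (N : ℕ) (S : Type*) [CommRing S] (𝓐 : Type*) [Ring 𝓐] [Algebra S 𝓐]

/-- Configuration space of `k` tensor factors of `ℂ^N`. -/
abbrev Site (N k : ℕ) := Fin k → Fin N

/-- An operator placed at site `i` of `k`. -/
def embS {k : ℕ} (i : Fin k) (M : Matrix (Fin N) (Fin N) 𝓐) :
    Matrix (Site N k) (Site N k) 𝓐 :=
  fun p q => if ∀ l, l ≠ i → p l = q l then M (p i) (q i) else 0

/-- A scalar (R-matrix) factor placed at the pair of sites `(i, j)` of `k`. -/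
def embP {k : ℕ} (i j : Fin k) (M : Matrix (Fin N × Fin N) (Fin N × Fin N) S) :
    Matrix (Site N k) (Site N k) 𝓐 :=
  fun p q => if ∀ l, l ≠ i → l ≠ j → p l = q l then
    algebraMap S 𝓐 (M (p i, p j) (q i, q j)) else 0

variable {k : ℕ}
variable (A B : Fin k → Fin k → Matrix (Fin N × Fin N) (Fin N × Fin N) S)
variable (ℓ : Fin k → Matrix (Fin N) (Fin N) 𝓐)

/-- `∏→_{i ∈ s} ∏→_{j > i, j ∈ t} ι R_{ij}` for lists of sites `s`, `t`. -/
def RprodOn (s t : List (Fin k)) : Matrix (Site N k) (Site N k) 𝓐 :=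
  (s.map fun i => ((t.filter fun j => decide (i < j)).map fun j => embP N S 𝓐 i j (A i j)).prod).prod

/-- The ordered product of operators `L` over a list of sites. -/
def LprodOn (s : List (Fin k)) : Matrix (Site N k) (Site N k) 𝓐 :=
  (s.map fun i => embS N 𝓐 i (ℓ i)).prod

/-- `L_{[s]} = R'_{[s]} ∏ L_i` over a list of sites. -/
def Lbrack (s : List (Fin k)) : Matrix (Site N k) (Site N k) 𝓐 :=
  RprodOn N S 𝓐 A s s * LprodOn N 𝓐 ℓ s

/-- `R'^{12}_{nm} = ∏←_{i ∈ first block} ∏→_{j ∈ second block} ι R_{ij}`. -/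
def R12prod (n : ℕ) : Matrix (Site N k) (Site N k) 𝓐 :=
  ((((List.finRange k).filter fun i => decide (i.val < n)).reverse).map fun i =>
    (((List.finRange k).filter fun j => decide (n ≤ j.val)).map fun j =>
      embP N S 𝓐 i j (A i j)).prod).prod

/-!
Let `a`, `b` be the two blocks of sites and `T_i(s) = ∏→_{j ∈ s, j > i} R_{ij}`, so that
`R'_{[n+m]} = (∏→_{i ∈ a} T_i(a) T_i(b)) R'_{[m]}`. For `i < j < b` the Yang–Baxter equation gives
`R_{ij} T_i(b) T_j(b) = T_j(b) T_i(b) R_{ij}`; together with the commutation of factors at disjoint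
sites this yields `T_i(a) T_i(b) C = C T_i(b) T_i(a)` for `C = ∏←_{i' ∈ a, i' > i} T_{i'}(b)`.
Collecting the `T_i(b)` on the left by induction over `a` gives
`R'_{[n+m]} = R'^{12}_{nm} R'_{[n]} R'_{[m]}`. Finally `R'_{[m]}` acts on the last `m` sites only,
so it commutes with `L₁ ⋯ L_n`.
-/

section Locality

def updatePair (p : Site N k) (i j : Fin k) (a b : Fin N) : Site N k :=
  Function.update (Function.update p i a) j b

variable {N}

lemma updatePair_apply_left (p : Site N k) {i j : Fin k} (hij : i ≠ j) (a b : Fin N) :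
    updatePair N p i j a b i = a := by
  simp [updatePair, hij]

lemma updatePair_apply_right (p : Site N k) (i j : Fin k) (a b : Fin N) :
    updatePair N p i j a b j = b := by
  simp [updatePair]

lemma updatePair_apply_of_ne (p : Site N k) {i j l : Fin k} (hi : l ≠ i) (hj : l ≠ j)
    (a b : Fin N) : updatePair N p i j a b l = p l := by
  simp [updatePair, hi, hj]

lemma updatePair_apply_eq_iff (p q : Site N k) (i j l : Fin k) :
    updatePair N p i j (q i) (q j) l = q l ↔ p l = updatePair N q i j (p i) (p j) l := by
  by_cases hj : l = j
  · subst hj; simp [updatePair]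
  by_cases hi : l = i
  · subst hi; simp [updatePair, hj]
  · rw [updatePair_apply_of_ne p hi hj, updatePair_apply_of_ne q hi hj]

lemma eq_updatePair {p r : Site N k} {i j : Fin k} (h : ∀ l, l ≠ i → l ≠ j → p l = r l) :
    r = updatePair N p i j (r i) (r j) := by
  funext l
  by_cases hj : l = j
  · subst hj; simp [updatePair]
  by_cases hi : l = i
  · subst hi; simp [updatePair, hj]
  · rw [updatePair_apply_of_ne p hi hj, h l hi hj]

variable (N)

/-- `Y` acts as the identity on the tensor factors at sites `i` and `j`. -/
def IsIdentityAt (i j : Fin k) (Y : Matrix (Site N k) (Site N k) 𝓐) : Prop :=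
  (∀ p q : Site N k, (p i ≠ q i ∨ p j ≠ q j) → Y p q = 0) ∧
    ∀ p q : Site N k, Y (updatePair N p i j (q i) (q j)) q = Y p (updatePair N q i j (p i) (p j))

variable {N S 𝓐}

lemma embP_mul_apply {i j : Fin k} (hij : i ≠ j) (M : Matrix (Fin N × Fin N) (Fin N × Fin N) S)
    {Y : Matrix (Site N k) (Site N k) 𝓐} (hY : IsIdentityAt N 𝓐 i j Y) (p q : Site N k) :
    (embP N S 𝓐 i j M * Y) p q =
      algebraMap S 𝓐 (M (p i, p j) (q i, q j)) * Y (updatePair N p i j (q i) (q j)) q := by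
  rw [Matrix.mul_apply, Finset.sum_eq_single (updatePair N p i j (q i) (q j))]
  · rw [embP, if_pos fun l hi hj => (updatePair_apply_of_ne p hi hj _ _).symm,
      updatePair_apply_left p hij, updatePair_apply_right]
  · intro r _ hr
    by_cases hpr : ∀ l, l ≠ i → l ≠ j → p l = r l
    · have hrq : r i ≠ q i ∨ r j ≠ q j := by
        by_contra! h
        exact hr (h.1 ▸ h.2 ▸ eq_updatePair hpr)
      rw [hY.1 r q hrq, mul_zero]
    · rw [embP, if_neg hpr, zero_mul]
  · exact fun h => absurd (Finset.mem_univ _) h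

lemma mul_embP_apply {i j : Fin k} (hij : i ≠ j) (M : Matrix (Fin N × Fin N) (Fin N × Fin N) S)
    {Y : Matrix (Site N k) (Site N k) 𝓐} (hY : IsIdentityAt N 𝓐 i j Y) (p q : Site N k) :
    (Y * embP N S 𝓐 i j M) p q =
      Y p (updatePair N q i j (p i) (p j)) * algebraMap S 𝓐 (M (p i, p j) (q i, q j)) := by
  rw [Matrix.mul_apply, Finset.sum_eq_single (updatePair N q i j (p i) (p j))]
  · rw [embP, if_pos fun l hi hj => updatePair_apply_of_ne q hi hj _ _,
      updatePair_apply_left q hij, updatePair_apply_right]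
  · intro r _ hr
    by_cases hrq : ∀ l, l ≠ i → l ≠ j → r l = q l
    · have hpr : p i ≠ r i ∨ p j ≠ r j := by
        by_contra! h
        exact hr (h.1 ▸ h.2 ▸ eq_updatePair fun l hi hj => (hrq l hi hj).symm)
      rw [hY.1 p r hpr, zero_mul]
    · rw [embP, if_neg hrq, mul_zero]
  · exact fun h => absurd (Finset.mem_univ _) h

/-- The entries of `embP` are central, so only the sites matter. -/
lemma commute_embP_of_isIdentityAt {i j : Fin k} (hij : i ≠ j)
    (M : Matrix (Fin N × Fin N) (Fin N × Fin N) S) {Y : Matrix (Site N k) (Site N k) 𝓐}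
    (hY : IsIdentityAt N 𝓐 i j Y) : Commute (embP N S 𝓐 i j M) Y := by
  ext p q
  rw [embP_mul_apply hij M hY, mul_embP_apply hij M hY, hY.2, Algebra.commutes]

lemma isIdentityAt_embS {i j l : Fin k} (hi : l ≠ i) (hj : l ≠ j) (L : Matrix (Fin N) (Fin N) 𝓐) :
    IsIdentityAt N 𝓐 i j (embS N 𝓐 l L) := by
  refine ⟨fun p q h => if_neg fun hpq => ?_, fun p q => ?_⟩
  · exact h.elim (· (hpq i hi.symm)) (· (hpq j hj.symm))
  · simp only [embS, updatePair_apply_of_ne _ hi hj, updatePair_apply_eq_iff]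

lemma isIdentityAt_embP {i j i' j' : Fin k} (hi : i' ≠ i) (hj : i' ≠ j) (hi' : j' ≠ i)
    (hj' : j' ≠ j) (M : Matrix (Fin N × Fin N) (Fin N × Fin N) S) :
    IsIdentityAt N 𝓐 i j (embP N S 𝓐 i' j' M) := by
  refine ⟨fun p q h => if_neg fun hpq => ?_, fun p q => ?_⟩
  · exact h.elim (· (hpq i hi.symm hi'.symm)) (· (hpq j hj.symm hj'.symm))
  · simp only [embP, updatePair_apply_of_ne _ hi hj, updatePair_apply_of_ne _ hi' hj',
      updatePair_apply_eq_iff]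

end Locality

section Products

variable {N S 𝓐 A}

variable (N S 𝓐 A) in
def YangBaxter : Prop :=
  ∀ i j l : Fin k, i < j → j < l →
    embP N S 𝓐 i j (A i j) * embP N S 𝓐 i l (A i l) * embP N S 𝓐 j l (A j l) =
      embP N S 𝓐 j l (A j l) * embP N S 𝓐 i l (A i l) * embP N S 𝓐 i j (A i j)

variable (N S 𝓐 A) in
def Rrow (i : Fin k) (t : List (Fin k)) : Matrix (Site N k) (Site N k) 𝓐 :=
  (t.map fun j => embP N S 𝓐 i j (A i j)).prod

variable (N S 𝓐 A) in
def Rcross (s t : List (Fin k)) : Matrix (Site N k) (Site N k) 𝓐 :=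
  (s.reverse.map fun i => Rrow N S 𝓐 A i t).prod

@[simp]
lemma Rrow_nil (i : Fin k) : Rrow N S 𝓐 A i [] = 1 := rfl

lemma Rrow_cons (i j : Fin k) (t : List (Fin k)) :
    Rrow N S 𝓐 A i (j :: t) = embP N S 𝓐 i j (A i j) * Rrow N S 𝓐 A i t := by
  simp [Rrow]

lemma Rrow_append (i : Fin k) (s t : List (Fin k)) :
    Rrow N S 𝓐 A i (s ++ t) = Rrow N S 𝓐 A i s * Rrow N S 𝓐 A i t := by
  simp [Rrow]

@[simp]
lemma Rcross_nil (t : List (Fin k)) : Rcross N S 𝓐 A [] t = 1 := rfl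

lemma Rcross_cons (i : Fin k) (s t : List (Fin k)) :
    Rcross N S 𝓐 A (i :: s) t = Rcross N S 𝓐 A s t * Rrow N S 𝓐 A i t := by
  simp [Rcross]

lemma Rcross_append_singleton (j : Fin k) (s t : List (Fin k)) :
    Rcross N S 𝓐 A (s ++ [j]) t = Rrow N S 𝓐 A j t * Rcross N S 𝓐 A s t := by
  simp [Rcross]

lemma commute_embP_Rrow {i j i' : Fin k} (hij : i ≠ j) (hi : i' ≠ i) (hj : i' ≠ j)
    {t : List (Fin k)} (hit : i ∉ t) (hjt : j ∉ t) (M : Matrix (Fin N × Fin N) (Fin N × Fin N) S) :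
    Commute (embP N S 𝓐 i j M) (Rrow N S 𝓐 A i' t) := by
  refine Commute.list_prod_right _ _ fun x hx => ?_
  obtain ⟨l, hl, rfl⟩ := List.mem_map.mp hx
  exact commute_embP_of_isIdentityAt hij M <| isIdentityAt_embP hi hj
    (ne_of_mem_of_not_mem hl hit) (ne_of_mem_of_not_mem hl hjt) _

lemma commute_embP_Rcross {i j : Fin k} (hij : i ≠ j) {s t : List (Fin k)} (his : i ∉ s)
    (hjs : j ∉ s) (hit : i ∉ t) (hjt : j ∉ t) (M : Matrix (Fin N × Fin N) (Fin N × Fin N) S) :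
    Commute (embP N S 𝓐 i j M) (Rcross N S 𝓐 A s t) := by
  refine Commute.list_prod_right _ _ fun x hx => ?_
  obtain ⟨i', hi', rfl⟩ := List.mem_map.mp hx
  rw [List.mem_reverse] at hi'
  exact commute_embP_Rrow hij (ne_of_mem_of_not_mem hi' his) (ne_of_mem_of_not_mem hi' hjs)
    hit hjt M

lemma commute_Rrow_Rrow {i j : Fin k} (hij : i ≠ j) {s t : List (Fin k)} (his : i ∉ s)
    (hjs : j ∉ s) (hit : i ∉ t) (hst : ∀ x ∈ s, x ∉ t) :
    Commute (Rrow N S 𝓐 A i s) (Rrow N S 𝓐 A j t) := by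
  refine Commute.list_prod_left _ _ fun x hx => ?_
  obtain ⟨l, hl, rfl⟩ := List.mem_map.mp hx
  exact commute_embP_Rrow (ne_of_mem_of_not_mem hl his).symm hij.symm
    (ne_of_mem_of_not_mem hl hjs).symm hit (hst l hl) _

lemma embP_mul_Rrow_mul_Rrow (hA : YangBaxter N S 𝓐 A) {i j : Fin k} {t : List (Fin k)}
    (h : (i :: j :: t).Pairwise (· < ·)) :
    embP N S 𝓐 i j (A i j) * Rrow N S 𝓐 A i t * Rrow N S 𝓐 A j t =
      Rrow N S 𝓐 A j t * Rrow N S 𝓐 A i t * embP N S 𝓐 i j (A i j) := by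
  induction t with
  | nil => simp
  | cons l t ih =>
    have ih := ih (h.sublist (by simp))
    simp only [List.pairwise_cons, List.mem_cons, forall_eq_or_imp] at h
    obtain ⟨⟨hij, hil, hit⟩, ⟨hjl, hjt⟩, hlt, -⟩ := h
    have hlt' : l ∉ t := fun h => lt_irrefl l (hlt l h)
    have hit' : i ∉ t := fun h => lt_irrefl i (hit i h)
    have hjt' : j ∉ t := fun h => lt_irrefl j (hjt j h)
    have c1 : Commute (embP N S 𝓐 j l (A j l)) (Rrow N S 𝓐 A i t) :=
      commute_embP_Rrow hjl.ne hij.ne hil.ne hjt' hlt' _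
    have c2 : Commute (embP N S 𝓐 i l (A i l)) (Rrow N S 𝓐 A j t) :=
      commute_embP_Rrow hil.ne hij.ne' hjl.ne hit' hlt' _
    have hyb := hA i j l hij hjl
    simp only [Rrow_cons]
    set P := embP N S 𝓐 i j (A i j)
    set X := embP N S 𝓐 i l (A i l)
    set Y := embP N S 𝓐 j l (A j l)
    set Ti := Rrow N S 𝓐 A i t
    set Tj := Rrow N S 𝓐 A j t
    calc P * (X * Ti) * (Y * Tj)
        = P * X * (Ti * Y) * Tj := by simp only [mul_assoc]
      _ = P * X * Y * (Ti * Tj) := by rw [← c1.eq]; simp only [mul_assoc]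
      _ = Y * X * (P * Ti * Tj) := by rw [hyb]; simp only [mul_assoc]
      _ = Y * (X * Tj) * (Ti * P) := by rw [ih]; simp only [mul_assoc]
      _ = Y * Tj * (X * Ti) * P := by rw [c2.eq]; simp only [mul_assoc]

end Products

section Splitting

variable {N S 𝓐 A}

lemma Rrow_mul_Rrow_mul_Rcross (hA : YangBaxter N S 𝓐 A) {i : Fin k} {s t : List (Fin k)}
    (h : (i :: (s ++ t)).Pairwise (· < ·)) :
    Rrow N S 𝓐 A i s * Rrow N S 𝓐 A i t * Rcross N S 𝓐 A s t =
      Rcross N S 𝓐 A s t * Rrow N S 𝓐 A i t * Rrow N S 𝓐 A i s := by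
  induction s using List.reverseRecOn with
  | nil => simp
  | append_singleton s j ih =>
    have ih := ih (h.sublist (by simp))
    have hybe := embP_mul_Rrow_mul_Rrow hA (h.sublist (by simp) : (i :: j :: t).Pairwise (· < ·))
    have hsites : i < j ∧ i ∉ s ∧ j ∉ s ∧ i ∉ t ∧ j ∉ t ∧ ∀ x ∈ s, x ∉ t := by
      simp only [List.append_assoc, List.cons_append, List.nil_append, List.pairwise_cons,
        List.pairwise_append, List.mem_append, List.mem_cons] at h
      grind
    obtain ⟨hij, his, hjs, hit, hjt, hst⟩ := hsites
    have cA : Commute (Rrow N S 𝓐 A i s) (Rrow N S 𝓐 A j t) :=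
      commute_Rrow_Rrow hij.ne his hjs hit hst
    have cB : Commute (embP N S 𝓐 i j (A i j)) (Rcross N S 𝓐 A s t) :=
      commute_embP_Rcross hij.ne his hjs hit hjt _
    rw [Rrow_append, Rrow_cons, Rrow_nil, mul_one, Rcross_append_singleton]
    set P := embP N S 𝓐 i j (A i j)
    set Tis := Rrow N S 𝓐 A i s
    set Tit := Rrow N S 𝓐 A i t
    set Tjt := Rrow N S 𝓐 A j t
    set C := Rcross N S 𝓐 A s t
    calc Tis * P * Tit * (Tjt * C)
        = Tis * (Tjt * Tit * P) * C := by rw [← hybe]; simp only [mul_assoc]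
      _ = Tis * Tjt * Tit * (P * C) := by simp only [mul_assoc]
      _ = Tjt * (Tis * Tit * C) * P := by rw [cA.eq, cB.eq]; simp only [mul_assoc]
      _ = Tjt * C * Tit * (Tis * P) := by rw [ih]; simp only [mul_assoc]

lemma RprodOn_cons_of_pairwise {i : Fin k} {t : List (Fin k)}
    (h : (i :: t).Pairwise (· < ·)) :
    RprodOn N S 𝓐 A (i :: t) (i :: t) = Rrow N S 𝓐 A i t * RprodOn N S 𝓐 A t t := by
  rw [List.pairwise_cons] at h
  have hrow : (i :: t).filter (fun j => decide (i < j)) = t := by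
    rw [List.filter_cons_of_neg (by simp)]
    exact List.filter_eq_self.mpr fun x hx => by simpa using h.1 x hx
  have htail : RprodOn N S 𝓐 A t (i :: t) = RprodOn N S 𝓐 A t t :=
    congrArg List.prod <| List.map_congr_left fun x hx => by
      rw [List.filter_cons_of_neg (by simpa using (h.1 x hx).le)]
  calc RprodOn N S 𝓐 A (i :: t) (i :: t)
      = Rrow N S 𝓐 A i ((i :: t).filter fun j => decide (i < j)) *
          RprodOn N S 𝓐 A t (i :: t) := rfl
    _ = Rrow N S 𝓐 A i t * RprodOn N S 𝓐 A t t := by rw [hrow, htail]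

lemma RprodOn_append (hA : YangBaxter N S 𝓐 A) {s t : List (Fin k)}
    (h : (s ++ t).Pairwise (· < ·)) :
    RprodOn N S 𝓐 A (s ++ t) (s ++ t) =
      Rcross N S 𝓐 A s t * RprodOn N S 𝓐 A s s * RprodOn N S 𝓐 A t t := by
  induction s with
  | nil => simp [RprodOn]
  | cons i s ih =>
    rw [List.cons_append] at h
    rw [List.cons_append, RprodOn_cons_of_pairwise h, ih h.of_cons,
      RprodOn_cons_of_pairwise (h.sublist (by simp)), Rcross_cons, Rrow_append]
    calc Rrow N S 𝓐 A i s * Rrow N S 𝓐 A i t *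
          (Rcross N S 𝓐 A s t * RprodOn N S 𝓐 A s s * RprodOn N S 𝓐 A t t)
        = Rrow N S 𝓐 A i s * Rrow N S 𝓐 A i t * Rcross N S 𝓐 A s t *
            RprodOn N S 𝓐 A s s * RprodOn N S 𝓐 A t t := by simp only [mul_assoc]
      _ = Rcross N S 𝓐 A s t * Rrow N S 𝓐 A i t * (Rrow N S 𝓐 A i s *
            RprodOn N S 𝓐 A s s) * RprodOn N S 𝓐 A t t := by
          rw [Rrow_mul_Rrow_mul_Rcross hA h]; simp only [mul_assoc]

lemma commute_RprodOn_LprodOn {s t : List (Fin k)} (hst : ∀ x ∈ s, x ∉ t) :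
    Commute (RprodOn N S 𝓐 A t t) (LprodOn N 𝓐 ℓ s) := by
  refine Commute.list_prod_left _ _ fun r hr => ?_
  obtain ⟨i, hi, rfl⟩ := List.mem_map.mp hr
  refine Commute.list_prod_left _ _ fun r hr => ?_
  obtain ⟨j, hj, rfl⟩ := List.mem_map.mp hr
  obtain ⟨hjt, hij⟩ := List.mem_filter.mp hj
  refine Commute.list_prod_right _ _ fun x hx => ?_
  obtain ⟨l, hl, rfl⟩ := List.mem_map.mp hx
  exact commute_embP_of_isIdentityAt (of_decide_eq_true hij).ne _ <| isIdentityAt_embS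
    (ne_of_mem_of_not_mem hi (hst l hl)).symm (ne_of_mem_of_not_mem hjt (hst l hl)).symm _

lemma LprodOn_append (s t : List (Fin k)) :
    LprodOn N 𝓐 ℓ (s ++ t) = LprodOn N 𝓐 ℓ s * LprodOn N 𝓐 ℓ t := by
  simp [LprodOn]

lemma R12prod_eq_Rcross (n : ℕ) :
    R12prod N S 𝓐 A n = Rcross N S 𝓐 A ((List.finRange k).filter fun i => decide (i.val < n))
      ((List.finRange k).filter fun i => decide (n ≤ i.val)) := rfl

lemma Lbrack_append (hA : YangBaxter N S 𝓐 A) {s t : List (Fin k)}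
    (h : (s ++ t).Pairwise (· < ·)) :
    Lbrack N S 𝓐 A ℓ (s ++ t) =
      Rcross N S 𝓐 A s t * Lbrack N S 𝓐 A ℓ s * Lbrack N S 𝓐 A ℓ t := by
  have hst : ∀ x ∈ s, x ∉ t := fun x hx hxt =>
    lt_irrefl x ((List.pairwise_append.mp h).2.2 x hx x hxt)
  have hcomm := commute_RprodOn_LprodOn (A := A) ℓ hst
  rw [Lbrack, Lbrack, Lbrack, RprodOn_append hA h, LprodOn_append,
    mul_assoc _ (RprodOn N S 𝓐 A t t), ← mul_assoc (RprodOn N S 𝓐 A t t), hcomm.eq]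
  simp only [mul_assoc]

end Splitting

lemma List.filter_lt_append_filter_le {l : List (Fin k)} (hl : l.Pairwise (· < ·)) (n : ℕ) :
    l.filter (fun i => decide (i.val < n)) ++ l.filter (fun i => decide (n ≤ i.val)) = l := by
  induction l with
  | nil => rfl
  | cons x l ih =>
    rw [List.pairwise_cons] at hl
    by_cases hx : x.val < n
    · rw [List.filter_cons_of_pos (by simpa using hx),
        List.filter_cons_of_neg (by simpa using hx), List.cons_append, ih hl.2]
    · have hle : ∀ y ∈ l, n ≤ y.val := fun y hy => by
        have := hl.1 y hy
        omega
      rw [List.filter_cons_of_neg (by simpa using hx), List.filter_cons_of_pos (by simpa using hx),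
        List.filter_eq_nil_iff.mpr fun y hy => by simpa using hle y hy,
        List.filter_eq_self.mpr fun y hy => by simpa using hle y hy, List.nil_append]

theorem stmt16 (n : ℕ)
    -- the Yang–Baxter equation for both families of expansions
    (hYBEA : ∀ i j l : Fin k, i < j → j < l →
      embP N S 𝓐 i j (A i j) * embP N S 𝓐 i l (A i l) * embP N S 𝓐 j l (A j l) =
        embP N S 𝓐 j l (A j l) * embP N S 𝓐 i l (A i l) * embP N S 𝓐 i j (A i j)) :
    Lbrack N S 𝓐 A ℓ (List.finRange k) =
      R12prod N S 𝓐 A n *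
        Lbrack N S 𝓐 A ℓ ((List.finRange k).filter fun i => decide (i.val < n)) *
        Lbrack N S 𝓐 A ℓ ((List.finRange k).filter fun i => decide (n ≤ i.val)) := by
  have hsplit := List.filter_lt_append_filter_le (List.pairwise_lt_finRange k) n
  have hsorted := List.pairwise_lt_finRange k
  rw [← hsplit] at hsorted
  rw [R12prod_eq_Rcross, ← Lbrack_append ℓ hYBEA hsorted, hsplit]

end
end
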